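/- arXiv:1602.08577 — 2 statements merged into one kernel-verified Lean document; each statement's English description precedes it below -/
import Mathlib

section
/- Let G be an Abelian group of cardinality γ > ℵ₀, let F_γ be the free group of rank γ, and let κ be a cardinal such that either ℵ₀ < κ < γ, or κ = γ and γ is singular. Then G and F_γ are not κ-coarsely equivalent: there do not exist subsets A ⊆ G and B ⊆ F_γ, sets X₀ ∈ [G]^{<κ} and Y₀ ∈ [F_γ]^{<κ} with G = X₀·A and F_γ = Y₀·B, and a bijection h : A → B such that for every X ∈ [G]^{<κ} and every Y ∈ [F_γ]^{<κ} there exist X' ∈ [G]^{<κ} and Y' ∈ [F_γ]^{<κ} with h((X·a) ∩ A) ⊆ Y'·h(a) for all a ∈ A and h⁻¹((Y·b) ∩ B) ⊆ X'·h⁻¹(b) for all b ∈ B. -/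
/-!
Write each generator `x i` of the free group as `u i * β i` with `u i ∈ Y₀`, `β i ∈ B`, and let
`a i := h⁻¹ (β i)`. As `G` is abelian, `a i * a j = a j * a i`, so the point `Q i j ∈ B` that `h`
assigns to (a point of `A` near) this product is symmetric in `i` and `j`. Coarseness of `h` gives,
for `j` in a `κ`-small set `T`, a `κ`-small `Y` with `Q i j ∈ Y * β i ⊆ Y * Y₀⁻¹ * x i`; hence, for
every `i` outside the `κ`-small set of letters of `Y * Y₀⁻¹`, the reduced word of `Q i j` ends in
`x i`. Since `Q i j = Q j i` cannot end in both `x i` and `x j`, a counting argument gives the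
contradiction: with singletons `T` when `κ < γ`, and with a cover of the generators by `cf γ` blocks
of size `< γ` when `κ = γ` is singular.
-/

open Cardinal Pointwise

universe u

theorem Cardinal.mk_biUnion_le_mul {α ι : Type u} {s : Set ι} {t : ι → Set α} {c : Cardinal.{u}}
    (ht : ∀ i ∈ s, #(t i) ≤ c) : #(⋃ i ∈ s, t i) ≤ #s * c :=
  (mk_biUnion_le t s).trans (by gcongr; exact ciSup_le' fun i => ht i.1 i.2)

theorem Cardinal.exists_small_cover_of_card_cof (α : Type u) (hα : ℵ₀ ≤ #α) :
    ∃ (S : Type u) (t : S → Set α), #S = (#α).ord.cof ∧ (∀ s, #(t s) < #α) ∧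
      ∀ x, ∃ s, x ∈ t s := by
  obtain ⟨e⟩ : Nonempty (α ≃ (#α).ord.ToType) := Cardinal.eq.1 (mk_ord_toType _).symm
  obtain ⟨S, hS, hScard⟩ := Order.exists_cof_eq (#α).ord.ToType
  refine ⟨S, fun s => e ⁻¹' Set.Iic s.1, by rw [hScard, Ordinal.cof_toType], fun s => ?_,
    fun x => ?_⟩
  · rw [mk_preimage_equiv, ← Set.Iio_insert]
    refine mk_insert_le.trans_lt (add_lt_of_lt hα ?_ (one_lt_aleph0.trans_le hα))
    simpa using mk_Iio_lt s.1 (by simp)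
  · obtain ⟨s, hs, hxs⟩ := hS (e x)
    exact ⟨⟨s, hs⟩, hxs⟩

section HoldsOutsideSmall

variable {ι : Type u}

def HoldsOutsideSmall (κ : Cardinal.{u}) (R : ι → ι → Prop) : Prop :=
  ∀ T : Set ι, #T < κ → ∃ S : Set ι, #S < κ ∧ ∀ i ∉ S, ∀ j ∈ T, R i j

variable {κ : Cardinal.{u}} {R : ι → ι → Prop}

theorem HoldsOutsideSmall.not_antisymm_of_lt_mk (hR : HoldsOutsideSmall κ R)
    (hκ : ℵ₀ ≤ κ) (hκι : κ < #ι) : ¬ Std.Antisymm R := by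
  rintro ⟨hanti⟩
  have hsingle (j : ι) : ∃ S : Set ι, #S < κ ∧ ∀ i ∉ S, R i j := by
    obtain ⟨S, hS, hSR⟩ := hR {j} (by simpa using one_lt_aleph0.trans_le hκ)
    exact ⟨S, hS, fun i hi => hSR i hi j rfl⟩
  choose S hS hSR using hsingle
  obtain ⟨V, hV⟩ := le_mk_iff_exists_set.1 hκι.le
  have hW : #((⋃ j ∈ V, S j) ∪ V : Set ι) < #ι := by
    refine (mk_union_le _ _).trans_lt (add_lt_of_lt (hκ.trans hκι.le) ?_ (hV.trans_lt hκι))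
    refine (mk_biUnion_le_mul fun j _ => (hS j).le).trans_lt ?_
    rwa [hV, mul_eq_self hκ]
  obtain ⟨k, hk⟩ := compl_nonempty_of_mk_lt_mk hW
  have hVS : V ⊆ S k := by
    intro i hiV
    by_contra hik
    have hki : k ∉ S i := fun h => hk (Or.inl (Set.mem_biUnion hiV h))
    obtain rfl := hanti _ _ (hSR k i hik) (hSR i k hki)
    exact hk (Or.inr hiV)
  exact (hS k).not_ge (hV ▸ mk_le_mk_of_subset hVS)

theorem HoldsOutsideSmall.not_antisymm_of_cof_ord_lt (hR : HoldsOutsideSmall #ι R)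
    (hι : ℵ₀ ≤ #ι) (hcof : (#ι).ord.cof < #ι) : ¬ Std.Antisymm R := by
  rintro ⟨hanti⟩
  obtain ⟨B, t, hB, ht, hcover⟩ := exists_small_cover_of_card_cof ι hι
  choose S hS hSR using fun b => hR (t b) (ht b)
  choose p hp using fun b => compl_nonempty_of_mk_lt_mk (hS b)
  have hP : #(Set.range p) < #ι := mk_range_le.trans_lt (hB ▸ hcof)
  obtain ⟨S', hS', hS'R⟩ := hR _ hP
  have hcover' (x : ι) : x ∈ S' ∪ Set.range p := by
    by_contra hx
    obtain ⟨b, hxb⟩ := hcover x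
    obtain rfl := hanti _ _ (hS'R x (fun h => hx (Or.inl h)) (p b) ⟨b, rfl⟩)
      (hSR b (p b) (hp b) x hxb)
    exact hx (Or.inr ⟨b, rfl⟩)
  refine ((mk_union_le _ _).trans_lt (add_lt_of_lt hι hS' hP)).not_ge ?_
  rw [← mk_univ]
  exact mk_le_mk_of_subset fun x _ => hcover' x

end HoldsOutsideSmall

namespace FreeGroup

variable {α : Type u} [DecidableEq α]

def letters (w : FreeGroup α) : Set α := {a | a ∈ w.toWord.map Prod.fst}

theorem letters_finite (w : FreeGroup α) : w.letters.Finite := List.finite_toSet _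

theorem mk_biUnion_letters_lt {κ : Cardinal.{u}} (hκ : ℵ₀ < κ) {W : Set (FreeGroup α)}
    (hW : #W < κ) : #(⋃ w ∈ W, w.letters) < κ :=
  (mk_biUnion_le_mul fun w _ => (letters_finite w).lt_aleph0.le).trans_lt
    (mul_lt_of_lt hκ.le hW hκ)

theorem toWord_mul_of {v : FreeGroup α} {a : α} (ha : a ∉ v.letters) :
    (v * of a).toWord = v.toWord ++ [(a, true)] := by
  rw [toWord_mul, toWord_of]
  refine IsReduced.reduce_eq (List.isChain_append.2 ⟨isReduced_toWord, .singleton _, ?_⟩)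
  rintro x hx _ ⟨⟩ (hxa : x.1 = a)
  exact absurd (hxa ▸ List.mem_map_of_mem (List.mem_of_getLast? hx)) ha

theorem getLast?_toWord_of_mem_mul_singleton {W : Set (FreeGroup α)} {w : FreeGroup α} {a : α}
    (hw : w ∈ W * {of a}) (ha : a ∉ ⋃ v ∈ W, v.letters) :
    w.toWord.getLast? = some (a, true) := by
  obtain ⟨v, hv, _, rfl, rfl⟩ := hw
  rw [toWord_mul_of fun hav => ha (Set.mem_biUnion hv hav), List.getLast?_concat]

end FreeGroup

section Coarse

variable {G H : Type u}

theorem Set.exists_mem_mul_singleton_of_mul_eq_univ [Mul G] {X A : Set G} (h : X * A = univ)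
    (g : G) : ∃ a ∈ A, g ∈ X * {a} := by
  obtain ⟨x, hx, a, ha, rfl⟩ := Set.mem_mul.1 (h ▸ Set.mem_univ g)
  exact ⟨a, ha, Set.mul_mem_mul hx rfl⟩

theorem Set.mem_mul_inv_mul_singleton [Group G] {Y Z : Set G} {x b c : G} (hx : x ∈ Y * {b})
    (hc : c ∈ Z * {b}) : x ∈ Y * Z⁻¹ * {c} := by
  obtain ⟨y, hy, _, rfl, rfl⟩ := hx
  obtain ⟨z, hz, b, rfl, rfl⟩ := hc
  exact ⟨y * z⁻¹, Set.mul_mem_mul hy (Set.inv_mem_inv.2 hz), z * b, rfl, by group⟩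

def IsBornologous [Mul G] [Mul H] (κ : Cardinal.{u}) {A : Set G} (f : A → H) : Prop :=
  ∀ X : Set G, #X < κ → ∃ Y : Set H, #Y < κ ∧
    ∀ a : A, ∀ g : G, g ∈ X * {(a : G)} → ∀ hg : g ∈ A, f ⟨g, hg⟩ ∈ Y * {f a}

theorem IsBornologous.exists_forall_mem_mul_singleton [CommGroup G] [Mul H] {κ : Cardinal.{u}}
    {A : Set G} {f : A → H} (hf : IsBornologous κ f) (hκ : ℵ₀ ≤ κ) {X₀ : Set G}
    (hX₀ : #X₀ < κ) {ι : Type u} (a : ι → A) {T : Set ι} (hT : #T < κ) :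
    ∃ Y : Set H, #Y < κ ∧ ∀ i, ∀ j ∈ T, ∀ g : A,
      (a i : G) * a j ∈ X₀ * {(g : G)} → f g ∈ Y * {f (a i)} := by
  have hX : #(X₀⁻¹ * (fun j => (a j : G)) '' T) < κ := by
    refine mk_mul_le.trans_lt ?_
    rw [mk_inv]
    exact mul_lt_of_lt hκ hX₀ (mk_image_le.trans_lt hT)
  obtain ⟨Y, hY, hfY⟩ := hf _ hX
  refine ⟨Y, hY, fun i j hj g hg => ?_⟩
  obtain ⟨x, hx, _, rfl, hxg⟩ := hg
  refine hfY (a i) g ⟨x⁻¹ * a j, Set.mul_mem_mul (Set.inv_mem_inv.2 hx) ⟨j, hj, rfl⟩, a i, rfl,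
    ?_⟩ g.2
  change x⁻¹ * a j * a i = g
  rw [mul_assoc, mul_comm (a j : G), ← hxg, inv_mul_cancel_left]

end Coarse

theorem not_coarsely_equivalent_abelian_free_general (γ κ : Cardinal.{u}) (hγ : ℵ₀ < γ)
    (hκ : (ℵ₀ < κ ∧ κ < γ) ∨ (κ = γ ∧ γ.ord.cof < γ))
    (G : Type u) [CommGroup G]
    (ι : Type u) (hι : #ι = γ) :
    ¬ ∃ (A : Set G) (B : Set (FreeGroup ι)) (X₀ : Set G) (Y₀ : Set (FreeGroup ι)),
        #X₀ < κ ∧ #Y₀ < κ ∧ X₀ * A = Set.univ ∧ Y₀ * B = Set.univ ∧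
        ∃ h : A ≃ B,
          ∀ X : Set G, ∀ Y : Set (FreeGroup ι), #X < κ → #Y < κ →
            ∃ (X' : Set G) (Y' : Set (FreeGroup ι)), #X' < κ ∧ #Y' < κ ∧
              (∀ a : A, ∀ g : G, g ∈ X * {(a : G)} → ∀ hgA : g ∈ A,
                (h ⟨g, hgA⟩ : FreeGroup ι) ∈ Y' * {(h a : FreeGroup ι)}) ∧
              (∀ b : B, ∀ w : FreeGroup ι, w ∈ Y * {(b : FreeGroup ι)} → ∀ hwB : w ∈ B,
                (h.symm ⟨w, hwB⟩ : G) ∈ X' * {(h.symm b : G)}) := by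
  classical
  rintro ⟨A, B, X₀, Y₀, hX₀, hY₀, hXA, hYB, h, hcoarse⟩
  have hκ₀ : ℵ₀ < κ := hκ.elim (·.1) fun hκγ => hκγ.1 ▸ hγ
  have hh : IsBornologous κ fun a : A => (h a : FreeGroup ι) := fun X hX => by
    obtain ⟨-, Y, -, hY, hXY, -⟩ := hcoarse X ∅ hX (by simpa using aleph0_pos.trans hκ₀)
    exact ⟨Y, hY, hXY⟩
  choose r hrA hr using Set.exists_mem_mul_singleton_of_mul_eq_univ hXA
  choose β hβB hβ using fun i => Set.exists_mem_mul_singleton_of_mul_eq_univ hYB (.of i)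
  let a (i : ι) : A := h.symm ⟨β i, hβB i⟩
  let Q (i j : ι) : FreeGroup ι := h ⟨r (a i * a j), hrA _⟩
  let R (i j : ι) : Prop := (Q i j).toWord.getLast? = some (i, true)
  have hR : Std.Antisymm R := ⟨fun i j hij hji => by
    have hQ : Q i j = Q j i := by simp only [Q, mul_comm]
    have hlast : some (i, true) = some (j, true) := hij.symm.trans (hQ ▸ hji)
    simpa using hlast⟩
  have hRsmall : HoldsOutsideSmall κ R := fun T hT => by
    obtain ⟨Y, hY, hYQ⟩ := hh.exists_forall_mem_mul_singleton hκ₀.le hX₀ a hT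
    have hYY₀ : #(Y * Y₀⁻¹) < κ := mk_mul_le.trans_lt (mk_inv Y₀ ▸ mul_lt_of_lt hκ₀.le hY hY₀)
    refine ⟨_, FreeGroup.mk_biUnion_letters_lt hκ₀ hYY₀, fun i hi j hj => ?_⟩
    refine FreeGroup.getLast?_toWord_of_mem_mul_singleton ?_ hi
    exact Set.mem_mul_inv_mul_singleton (by simpa [a] using hYQ i j hj _ (hr _)) (hβ i)
  rcases hκ with ⟨-, hκγ⟩ | ⟨rfl, hcof⟩
  · exact hRsmall.not_antisymm_of_lt_mk hκ₀.le (hι ▸ hκγ) hR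
  · subst hι
    exact hRsmall.not_antisymm_of_cof_ord_lt hγ.le hcof hR

/-- Let `G` be an Abelian group of cardinality `γ > ℵ₀` and let `F_γ` be the free group
of rank `γ`. If either `ℵ₀ < κ < γ`, or `κ = γ` and `γ` is singular, then `G` and `F_γ`
are not `κ`-coarsely equivalent: there are no large subsets `A ⊆ G`, `B ⊆ F_γ`
(i.e. `G = X₀ A` and `F_γ = Y₀ B` with `X₀ ∈ [G]^{<κ}`, `Y₀ ∈ [F_γ]^{<κ}`) and bijection
`h : A → B` such that for all `X ∈ [G]^{<κ}`, `Y ∈ [F_γ]^{<κ}` there exist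
`X' ∈ [G]^{<κ}`, `Y' ∈ [F_γ]^{<κ}` with `h((X a) ∩ A) ⊆ Y' ⬝ h(a)` for all `a ∈ A` and
`h⁻¹((Y b) ∩ B) ⊆ X' ⬝ h⁻¹(b)` for all `b ∈ B`. -/
theorem not_coarsely_equivalent_abelian_free (γ κ : Cardinal.{u}) (hγ : ℵ₀ < γ)
    (hκ : (ℵ₀ < κ ∧ κ < γ) ∨ (κ = γ ∧ γ.ord.cof < γ))
    (G : Type u) [CommGroup G] (hG : #G = γ)
    (ι : Type u) (hι : #ι = γ) :
    ¬ ∃ (A : Set G) (B : Set (FreeGroup ι)) (X₀ : Set G) (Y₀ : Set (FreeGroup ι)),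
        #X₀ < κ ∧ #Y₀ < κ ∧ X₀ * A = Set.univ ∧ Y₀ * B = Set.univ ∧
        ∃ h : A ≃ B,
          ∀ X : Set G, ∀ Y : Set (FreeGroup ι), #X < κ → #Y < κ →
            ∃ (X' : Set G) (Y' : Set (FreeGroup ι)), #X' < κ ∧ #Y' < κ ∧
              (∀ a : A, ∀ g : G, g ∈ X * {(a : G)} → ∀ hgA : g ∈ A,
                (h ⟨g, hgA⟩ : FreeGroup ι) ∈ Y' * {(h a : FreeGroup ι)}) ∧
              (∀ b : B, ∀ w : FreeGroup ι, w ∈ Y * {(b : FreeGroup ι)} → ∀ hwB : w ∈ B,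
                (h.symm ⟨w, hwB⟩ : G) ∈ X' * {(h.symm b : G)}) :=
  not_coarsely_equivalent_abelian_free_general γ κ hγ hκ G ι hι
end

section
/- Let G be an Abelian group of cardinality γ > ℵ₀, let κ be an uncountable cardinal with κ ≤ γ, and let (G_α)_{α<γ}, (X_α)_{α<γ} be as follows: (G_α)_{α<γ} is a chain of subgroups with G_0 trivial, G_α ⊊ G_β for α < β, continuity at limit ordinals, union G, and [G_{α+1}:G_α] = ℵ₀; each X_α ⊆ G_{α+1} \ G_α satisfies G_{α+1} \ G_α = X_α·G_α with distinct elements of X_α in distinct cosets of G_α. For g ≠ e, let supt(g) = {α_s, …, α_1, α_0} be the set of indices in the unique representation g = x_s⋯x_1x_0 with x_i ∈ X_{α_i} and α_0 > ⋯ > α_s, and supt(e) = ∅. Then for every subset F of G with |F| < κ, there exists a subgroup Y of G with F ⊆ Y, |Y| < κ, and with the property that X_α ⊆ Y whenever g ∈ Y and α ∈ supt(g). -/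
open Cardinal Pointwise

universe u

/-!
A normal form of `g` is unique: its leading index `α` is pinned down by `g ∈ G_{α+1} \ G_α`,
and its leading letter by the coset `g G_α`. So `supt g` is finite, and as each `X_α` injects
into `G_{α+1}/G_α` it is countable; hence `g ↦ ⋃_{α ∈ supt g} X_α` has countable values.
Closing `F` off under this map and the group operations in `ω` steps gives a subgroup of
cardinality at most `max |F| ℵ₀ < κ`.
-/

namespace Subgroup

variable {G : Type u} [Group G]

theorem cardinalMk_closure_le_max (s : Set G) : #(closure s) ≤ max #s ℵ₀ := by
  rcases s.eq_empty_or_nonempty with rfl | hs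
  · simp
  · have := hs.to_subtype
    rw [FreeGroup.closure_eq_range]
    exact mk_range_le.trans (mk_freeGroup s).le

theorem exists_saturated_of_cardinalMk_le (T : G → Set G) {c : Cardinal.{u}} (hc : ℵ₀ ≤ c)
    (hT : ∀ g, #(T g) ≤ c) (F : Set G) (hF : #F ≤ c) :
    ∃ Y : Subgroup G, F ⊆ Y ∧ #(Y : Set G) ≤ c ∧ ∀ g ∈ Y, T g ⊆ Y := by
  let step : Subgroup G → Subgroup G := fun H => closure (H ∪ ⋃ g : H, T g)
  have le_step (H : Subgroup G) : H ≤ step H := fun _ hg => subset_closure (Or.inl hg)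
  have closure_card_le {s : Set G} (hs : #s ≤ c) : #(closure s) ≤ c :=
    (cardinalMk_closure_le_max s).trans (max_le hs hc)
  have step_card_le {H : Subgroup G} (hH : #(H : Set G) ≤ c) : #(step H : Set G) ≤ c := by
    refine closure_card_le ((mk_union_le _ _).trans ?_)
    calc #(H : Set G) + #(⋃ g : H, T g) ≤ c + #H * ⨆ g : H, #(T g) :=
          add_le_add hH (mk_iUnion_le _)
      _ ≤ c + c * c := by gcongr; exacts [hH, ciSup_le' fun g => hT g]
      _ = c := by rw [mul_eq_self hc, add_eq_self hc]
  let Ys : ℕ → Subgroup G := fun n => step^[n] (closure F)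
  have Ys_succ (n : ℕ) : Ys (n + 1) = step (Ys n) := Function.iterate_succ_apply' ..
  have Ys_mono : Monotone Ys := monotone_nat_of_le_succ fun n => (Ys_succ n).symm ▸ le_step _
  have Ys_card (n : ℕ) : #(Ys n : Set G) ≤ c := by
    induction n with
    | zero => exact closure_card_le hF
    | succ n ih => exact Ys_succ n ▸ step_card_le ih
  refine ⟨⨆ n, Ys n, subset_closure.trans (le_iSup Ys 0), ?_, fun g hg => ?_⟩
  · rw [coe_iSup_of_directed Ys_mono.directed_le]
    calc #(⋃ n, (Ys n : Set G)) ≤ ℵ₀ * ⨆ n, #(Ys n : Set G) := by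
          simpa using mk_iUnion_le_lift fun n => (Ys n : Set G)
      _ ≤ c * c := mul_le_mul' hc (ciSup_le' Ys_card)
      _ = c := mul_eq_self hc
  · obtain ⟨n, hn⟩ := (mem_iSup_of_directed Ys_mono.directed_le).mp hg
    have hT : T g ⊆ Ys (n + 1) := fun x hx =>
      (Ys_succ n).symm ▸ subset_closure (Or.inr (Set.mem_iUnion.mpr ⟨⟨g, hn⟩, hx⟩))
    exact hT.trans (le_iSup Ys (n + 1))

end Subgroup

theorem Subgroup.cardinalMk_le_index_of_mul_inv_mem {G : Type u} [CommGroup G]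
    {H K : Subgroup G} {s : Set G} (hsK : s ⊆ K)
    (hsep : ∀ x ∈ s, ∀ y ∈ s, x * y⁻¹ ∈ H → x = y) :
    #s ≤ #(K ⧸ H.subgroupOf K) := by
  refine mk_le_of_injective (f := fun x : s => (⟨x, hsK x.2⟩ : K)) fun x y hxy => ?_
  rw [QuotientGroup.eq, Subgroup.mem_subgroupOf] at hxy
  have : (y : G) * (x : G)⁻¹ ∈ H := by simpa [mul_comm] using hxy
  exact Subtype.ext (hsep y y.2 x x.2 this).symm

section NormalForm

variable {G : Type u} {X : Ordinal.{u} → Set G} {o : Ordinal.{u}}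
  {l : List (Ordinal.{u} × G)} {α β : Ordinal.{u}} {x : G}

def IsNormalForm (X : Ordinal.{u} → Set G) (o : Ordinal.{u}) (l : List (Ordinal.{u} × G)) :
    Prop :=
  (l.map Prod.fst).Pairwise (· > ·) ∧ ∀ p ∈ l, p.1 < o ∧ p.2 ∈ X p.1

def supt [Monoid G] (X : Ordinal.{u} → Set G) (o : Ordinal.{u}) (g : G) : Set Ordinal.{u} :=
  {α | ∃ l, IsNormalForm X o l ∧ (l.map Prod.snd).prod = g ∧ α ∈ l.map Prod.fst}

namespace IsNormalForm

theorem head (hl : IsNormalForm X o ((α, x) :: l)) : α < o ∧ x ∈ X α :=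
  hl.2 _ List.mem_cons_self

theorem tail (hl : IsNormalForm X o ((α, x) :: l)) : IsNormalForm X o l :=
  ⟨(List.pairwise_cons.mp hl.1).2, fun p hp => hl.2 p (List.mem_cons_of_mem _ hp)⟩

theorem lt_head (hl : IsNormalForm X o ((α, x) :: l)) : ∀ p ∈ l, p.1 < α :=
  fun p hp => (List.pairwise_cons.mp hl.1).1 p.1 (List.mem_map_of_mem hp)

end IsNormalForm

section Group

variable [Group G] {Gs : Ordinal.{u} → Subgroup G}
  (hmono : MonotoneOn Gs (Set.Iio o)) (hX : ∀ α < o, X α ⊆ (Gs (α + 1) : Set G) \ Gs α)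
include hmono hX

theorem list_prod_snd_mem_of_fst_lt (hβ : β < o) (hl : ∀ p ∈ l, p.1 < β ∧ p.2 ∈ X p.1) :
    (l.map Prod.snd).prod ∈ Gs β := by
  refine Subgroup.list_prod_mem (K := Gs β) fun y hy => ?_
  obtain ⟨p, hp, rfl⟩ := List.mem_map.mp hy
  have hpβ : p.1 + 1 ≤ β := Order.add_one_le_of_lt (hl p hp).1
  exact hmono (hpβ.trans_lt hβ) hβ hpβ (hX p.1 ((hl p hp).1.trans hβ) (hl p hp).2).1

theorem IsNormalForm.prod_tail_mem (hl : IsNormalForm X o ((α, x) :: l)) :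
    (l.map Prod.snd).prod ∈ Gs α :=
  list_prod_snd_mem_of_fst_lt hmono hX hl.head.1 fun p hp =>
    ⟨hl.lt_head p hp, (hl.tail.2 p hp).2⟩

theorem IsNormalForm.prod_mem_of_head_lt (hl : IsNormalForm X o ((α, x) :: l))
    (hαβ : α < β) (hβ : β < o) : (((α, x) :: l).map Prod.snd).prod ∈ Gs β := by
  refine list_prod_snd_mem_of_fst_lt hmono hX hβ fun p hp => ⟨?_, (hl.2 p hp).2⟩
  rcases List.mem_cons.mp hp with rfl | hp
  exacts [hαβ, (hl.lt_head p hp).trans hαβ]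

theorem IsNormalForm.prod_notMem_of_head (hl : IsNormalForm X o ((α, x) :: l)) :
    (((α, x) :: l).map Prod.snd).prod ∉ Gs α := by
  rw [List.map_cons, List.prod_cons, Subgroup.mul_mem_cancel_right _ (hl.prod_tail_mem hmono hX)]
  exact (hX α hl.head.1 hl.head.2).2

end Group

theorem IsNormalForm.eq_of_prod_eq [CommGroup G] {Gs : Ordinal.{u} → Subgroup G}
    (hmono : MonotoneOn Gs (Set.Iio o)) (hX : ∀ α < o, X α ⊆ (Gs (α + 1) : Set G) \ Gs α)
    (hsep : ∀ α < o, ∀ x ∈ X α, ∀ y ∈ X α, x * y⁻¹ ∈ Gs α → x = y)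
    {l l' : List (Ordinal.{u} × G)} (hl : IsNormalForm X o l) (hl' : IsNormalForm X o l')
    (h : (l.map Prod.snd).prod = (l'.map Prod.snd).prod) : l = l' := by
  induction l generalizing l' with
  | nil =>
    cases l' with
    | nil => rfl
    | cons q l' =>
      exact (hl'.prod_notMem_of_head hmono hX (h ▸ one_mem _)).elim
  | cons q l ih =>
    obtain ⟨α, x⟩ := q
    cases l' with
    | nil => exact (hl.prod_notMem_of_head hmono hX (h.symm ▸ one_mem _)).elim
    | cons q' l' =>
      obtain ⟨β, y⟩ := q'
      have hαβ : α = β := by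
        refine le_antisymm (not_lt.mp fun hlt => ?_) (not_lt.mp fun hlt => ?_)
        · exact hl.prod_notMem_of_head hmono hX
            (h ▸ hl'.prod_mem_of_head_lt hmono hX hlt hl.head.1)
        · exact hl'.prod_notMem_of_head hmono hX
            (h ▸ hl.prod_mem_of_head_lt hmono hX hlt hl'.head.1)
      subst hαβ
      simp only [List.map_cons, List.prod_cons] at h
      have hxy : x = y := by
        refine hsep α hl.head.1 x hl.head.2 y hl'.head.2 ?_
        have : x * y⁻¹ = (l'.map Prod.snd).prod * ((l.map Prod.snd).prod)⁻¹ := by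
          rw [eq_mul_inv_iff_mul_eq, mul_right_comm, h, mul_inv_cancel_comm]
        exact this ▸ mul_mem (hl'.prod_tail_mem hmono hX) (inv_mem (hl.prod_tail_mem hmono hX))
      subst hxy
      rw [ih hl.tail hl'.tail (mul_left_cancel h)]

end NormalForm

section Support

variable {G : Type u} [CommGroup G] {Gs : Ordinal.{u} → Subgroup G} {X : Ordinal.{u} → Set G}
  {o : Ordinal.{u}}

theorem supt_finite (hmono : MonotoneOn Gs (Set.Iio o))
    (hX : ∀ α < o, X α ⊆ (Gs (α + 1) : Set G) \ Gs α)
    (hsep : ∀ α < o, ∀ x ∈ X α, ∀ y ∈ X α, x * y⁻¹ ∈ Gs α → x = y) (g : G) :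
    (supt X o g).Finite := by
  by_cases hg : ∃ l, IsNormalForm X o l ∧ (l.map Prod.snd).prod = g
  · obtain ⟨l₀, h₀, rfl⟩ := hg
    refine (l₀.map Prod.fst).finite_toSet.subset ?_
    rintro α ⟨l, hl, hprod, hα⟩
    rwa [hl.eq_of_prod_eq hmono hX hsep h₀ hprod] at hα
  · exact Set.finite_empty.subset fun α ⟨l, hl, hprod, _⟩ => hg ⟨l, hl, hprod⟩

theorem countable_biUnion_supt (hmono : MonotoneOn Gs (Set.Iio o))
    (hX : ∀ α < o, X α ⊆ (Gs (α + 1) : Set G) \ Gs α)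
    (hsep : ∀ α < o, ∀ x ∈ X α, ∀ y ∈ X α, x * y⁻¹ ∈ Gs α → x = y)
    (hXc : ∀ α < o, (X α).Countable) (g : G) : (⋃ α ∈ supt X o g, X α).Countable := by
  refine (supt_finite hmono hX hsep g).countable.biUnion fun α ⟨l, hl, _, hα⟩ => hXc α ?_
  obtain ⟨p, hp, rfl⟩ := List.mem_map.mp hα
  exact (hl.2 p hp).1

end Support

theorem exists_small_saturated_subgroup_general (γ κ : Cardinal.{u})
    (hκ : ℵ₀ < κ)
    (G : Type u) [CommGroup G]
    (Gs : Ordinal.{u} → Subgroup G)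
    (hmono : ∀ α β : Ordinal.{u}, α < β → β < γ.ord → Gs α < Gs β)
    (hindex : ∀ α : Ordinal.{u}, α < γ.ord →
      #(↥(Gs (α + 1)) ⧸ ((Gs α).subgroupOf (Gs (α + 1)))) = ℵ₀)
    (X : Ordinal.{u} → Set G)
    (hXsub : ∀ α : Ordinal.{u}, α < γ.ord →
      X α ⊆ (Gs (α + 1) : Set G) \ (Gs α : Set G))
    (hXsep : ∀ α : Ordinal.{u}, α < γ.ord →
      ∀ x ∈ X α, ∀ y ∈ X α, x * y⁻¹ ∈ Gs α → x = y)
    (F : Set G) (hF : #F < κ) :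
    ∃ Y : Subgroup G, F ⊆ (Y : Set G) ∧ #(Y : Set G) < κ ∧
      ∀ g ∈ Y, ∀ l : List (Ordinal.{u} × G),
        (l.map Prod.fst).Chain' (· > ·) →
        (∀ p ∈ l, p.1 < γ.ord ∧ p.2 ∈ X p.1) →
        (l.map Prod.snd).prod = g →
        ∀ p ∈ l, X p.1 ⊆ (Y : Set G) := by
  have hmonoOn : MonotoneOn Gs (Set.Iio γ.ord) := fun α _ β hβ hαβ =>
    hαβ.eq_or_lt.elim (fun h => h ▸ le_rfl) fun h => (hmono α β h hβ).le
  have hXc (α : Ordinal.{u}) (hα : α < γ.ord) : (X α).Countable :=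
    le_aleph0_iff_set_countable.mp <| (hindex α hα) ▸
      Subgroup.cardinalMk_le_index_of_mul_inv_mem (fun x hx => (hXsub α hα hx).1) (hXsep α hα)
  obtain ⟨Y, hFY, hYcard, hYsat⟩ := Subgroup.exists_saturated_of_cardinalMk_le
    (fun g => ⋃ α ∈ supt X γ.ord g, X α) (le_max_right #F ℵ₀)
    (fun g => (le_aleph0_iff_set_countable.mpr
      (countable_biUnion_supt hmonoOn hXsub hXsep hXc g)).trans (le_max_right _ _))
    F (le_max_left _ _)
  refine ⟨Y, hFY, hYcard.trans_lt (max_lt hF hκ), fun g hg l hc hl hprod p hp => ?_⟩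
  have hsupt : p.1 ∈ supt X γ.ord g :=
    ⟨l, ⟨List.isChain_iff_pairwise.mp hc, hl⟩, hprod, List.mem_map_of_mem hp⟩
  exact (Set.subset_biUnion_of_mem hsupt).trans (hYsat g hg)

/-- Given a chain of subgroups `(G_α)_{α<γ}` of an Abelian group `G` of cardinality
`γ > ℵ₀` (with `G_0` trivial, strictly increasing, continuous at limits, union `G`, and
`[G_{α+1} : G_α] = ℵ₀`), transversals `X_α` of the cosets of `G_α` in `G_{α+1} \ G_α`,
and an uncountable cardinal `κ ≤ γ`: for every `F ⊆ G` with `|F| < κ` there is a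
subgroup `Y` of `G` with `F ⊆ Y`, `|Y| < κ`, and such that `X_α ⊆ Y` whenever `g ∈ Y`
and `α ∈ supt g`, where `supt g` is the set of indices occurring in the unique
representation `g = x_s ⋯ x_1 x_0` (`x_i ∈ X_{α_i}`, `α_0 > ⋯ > α_s`), encoded as a list
`[(α_0, x_0), …, (α_s, x_s)]`. -/
theorem exists_small_saturated_subgroup (γ κ : Cardinal.{u})
    (hγ : ℵ₀ < γ) (hκ : ℵ₀ < κ) (hκγ : κ ≤ γ)
    (G : Type u) [CommGroup G] (hG : #G = γ)
    (Gs : Ordinal.{u} → Subgroup G)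
    (h0 : Gs 0 = ⊥)
    (hmono : ∀ α β : Ordinal.{u}, α < β → β < γ.ord → Gs α < Gs β)
    (hlim : ∀ β : Ordinal.{u}, β < γ.ord → Order.IsSuccLimit β →
      (Gs β : Set G) = ⋃ (α : Ordinal.{u}) (_ : α < β), (Gs α : Set G))
    (hunion : (⋃ (α : Ordinal.{u}) (_ : α < γ.ord), (Gs α : Set G)) = Set.univ)
    (hindex : ∀ α : Ordinal.{u}, α < γ.ord →
      #(↥(Gs (α + 1)) ⧸ ((Gs α).subgroupOf (Gs (α + 1)))) = ℵ₀)
    (X : Ordinal.{u} → Set G)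
    (hXsub : ∀ α : Ordinal.{u}, α < γ.ord →
      X α ⊆ (Gs (α + 1) : Set G) \ (Gs α : Set G))
    (hXcover : ∀ α : Ordinal.{u}, α < γ.ord →
      (Gs (α + 1) : Set G) \ (Gs α : Set G) = X α * (Gs α : Set G))
    (hXsep : ∀ α : Ordinal.{u}, α < γ.ord →
      ∀ x ∈ X α, ∀ y ∈ X α, x * y⁻¹ ∈ Gs α → x = y)
    (F : Set G) (hF : #F < κ) :
    ∃ Y : Subgroup G, F ⊆ (Y : Set G) ∧ #(Y : Set G) < κ ∧
      ∀ g ∈ Y, ∀ l : List (Ordinal.{u} × G),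
        (l.map Prod.fst).Chain' (· > ·) →
        (∀ p ∈ l, p.1 < γ.ord ∧ p.2 ∈ X p.1) →
        (l.map Prod.snd).prod = g →
        ∀ p ∈ l, X p.1 ⊆ (Y : Set G) :=
  exists_small_saturated_subgroup_general γ κ hκ G Gs hmono hindex X hXsub hXsep F hF
end
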